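/- Let k ≥ 2 and let G be a simple graph such that the constant term a₀ of the characteristic polynomial of Q(G) equals ±2. Then for every t ≥ 1, the constant term of the characteristic polynomial of Q(G∘P_k^t) also equals ±2 (i.e., is 2 or −2). -/

import Mathlib

open Matrix Polynomial BigOperators

/-- The signless Laplacian matrix `Q(G) = D(G) + A(G)` of a simple graph. -/
noncomputable def qMat (R : Type) [Ring R] {V : Type} [Fintype V] [DecidableEq V]
    (G : SimpleGraph V) : Matrix V V R :=
  letI := Classical.decRel G.Adj
  G.degMatrix R + G.adjMatrix R

/-- The determinant of the Q-walk matrix `[e, Qe, …, Q^{m-1}e]` of a graph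
(rows indexed by vertices via a fixed enumeration; well defined up to sign). -/
noncomputable def qWalkDet {V : Type} [Fintype V] [DecidableEq V] (G : SimpleGraph V) : ℝ :=
  Matrix.det (Matrix.of fun i j : Fin (Fintype.card V) =>
    ((qMat ℝ G ^ (j : ℕ)) *ᵥ (fun _ => (1 : ℝ))) ((Fintype.equivFin V).symm i))

/-- The rooted product `G ∘ P_k`: a pendant path on `k-1` extra vertices attached
at each vertex of `G`; level `0` is the copy of `G`. -/
def rootedProd {V : Type} (G : SimpleGraph V) (k : ℕ) : SimpleGraph (V × Fin k) :=
  SimpleGraph.fromRel (fun a b =>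
    (a.2 = b.2 ∧ (a.2 : ℕ) = 0 ∧ G.Adj a.1 b.1) ∨ (a.1 = b.1 ∧ (a.2 : ℕ) + 1 = (b.2 : ℕ)))

/-- A graph is determined by its generalized Q-spectrum. -/
def IsDGQS {V : Type} [Fintype V] [DecidableEq V] (G : SimpleGraph V) : Prop :=
  ∀ H : SimpleGraph V,
    (qMat ℝ H).charpoly = (qMat ℝ G).charpoly →
    (qMat ℝ Hᶜ).charpoly = (qMat ℝ Gᶜ).charpoly →
    Nonempty (H ≃g G)


/-- Vertex type of the iterated rooted product `G ∘ P_k^t`. -/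
def iterVertex (V : Type) (k : ℕ) : ℕ → Type
  | 0 => V
  | (t + 1) => iterVertex V k t × Fin k

instance iterVertexFintype (V : Type) [Fintype V] (k : ℕ) :
    ∀ t, Fintype (iterVertex V k t)
  | 0 => inferInstanceAs (Fintype V)
  | (t + 1) => @instFintypeProd _ _ (iterVertexFintype V k t) inferInstance

instance iterVertexDecEq (V : Type) [DecidableEq V] (k : ℕ) :
    ∀ t, DecidableEq (iterVertex V k t)
  | 0 => inferInstanceAs (DecidableEq V)
  | (t + 1) => @instDecidableEqProd _ _ (iterVertexDecEq V k t) inferInstance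

/-- The iterated rooted product `G ∘ P_k^t`: `G ∘ P_k^0 = G` and
`G ∘ P_k^t = (G ∘ P_k^{t-1}) ∘ P_k`. -/
def iterRootedProd {V : Type} (G : SimpleGraph V) (k : ℕ) :
    ∀ t, SimpleGraph (iterVertex V k t)
  | 0 => G
  | (t + 1) => rootedProd (iterRootedProd G k t) k

/-! Writing `Q(G ∘ P_k)` in blocks as `Q(G) ⊗ E₀₀ + I ⊗ Q(P_k)`, it factors as
`(I ⊗ W) ((Q(G) - I) ⊗ E₀₀ + I) (I ⊗ W)ᵀ`, where `W` is the upper unitriangular matrix with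
`W Wᵀ = Q(P_k) + E₀₀` and `W E₀₀ = E₀₀`. The middle factor is block diagonal with blocks
`Q(G), I, …, I`, so `det Q(G ∘ P_k) = det Q(G)`. Iterating, and using that the constant term
of the characteristic polynomial is `±det`, gives the claim. -/

open SimpleGraph Finset
open scoped Kronecker

open scoped Classical in
lemma qMat_apply {R V : Type} [Ring R] [Fintype V] [DecidableEq V] (G : SimpleGraph V) (a b : V) :
    qMat R G a b = if a = b then (G.degree a : R) else if G.Adj a b then 1 else 0 := by
  by_cases h : a = b
  · subst h; simp [qMat, degMatrix]
  · simp [qMat, degMatrix, h]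

open scoped Classical in
lemma pathGraph_degree {k : ℕ} (s : Fin k) :
    (pathGraph k).degree s =
      (if 0 < (s : ℕ) then 1 else 0) + (if (s : ℕ) + 1 < k then 1 else 0) := by
  rw [← card_neighborFinset_eq_degree, neighborFinset_eq_filter, card_filter]
  simp only [pathGraph_adj]
  rw [Fin.sum_univ_eq_sum_range fun i => if (s : ℕ) + 1 = i ∨ i + 1 = s then 1 else 0]
  have hsplit : ∀ i, (if (s : ℕ) + 1 = i ∨ i + 1 = s then 1 else 0) =
      (if i = (s : ℕ) + 1 then 1 else 0) + if i + 1 = s then 1 else 0 := by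
    intro i; split_ifs <;> omega
  simp only [hsplit, sum_add_distrib, sum_ite_eq', mem_range]
  obtain ⟨_ | m, hm⟩ := s
  · simp
  · simp [add_comm, (by omega : m < k)]

lemma rootedProd_adj {V : Type} (G : SimpleGraph V) (k : ℕ) {u v : V} {s r : Fin k} :
    (rootedProd G k).Adj (u, s) (v, r) ↔
      (s = r ∧ (s : ℕ) = 0 ∧ G.Adj u v) ∨ (u = v ∧ (pathGraph k).Adj s r) := by
  simp only [rootedProd, fromRel_adj, pathGraph_adj, Fin.ext_iff, ne_eq, Prod.mk.injEq,
    G.adj_comm v u]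
  have hne : G.Adj u v → u ≠ v := G.ne_of_adj
  grind

open scoped Classical in
lemma rootedProd_degree {V : Type} [Fintype V] (G : SimpleGraph V) (k : ℕ) (u : V) (s : Fin k) :
    (rootedProd G k).degree (u, s) =
      (if (s : ℕ) = 0 then G.degree u else 0) + (pathGraph k).degree s := by
  have hnbr : (rootedProd G k).neighborFinset (u, s) =
      (if (s : ℕ) = 0 then G.neighborFinset u ×ˢ {s} else ∅) ∪
        {u} ×ˢ (pathGraph k).neighborFinset s := by
    ext ⟨v, r⟩
    split_ifs <;> simp [rootedProd_adj, *, eq_comm, and_comm]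
  have hdisj : Disjoint (if (s : ℕ) = 0 then G.neighborFinset u ×ˢ {s} else ∅)
      ({u} ×ˢ (pathGraph k).neighborFinset s) := by
    split_ifs
    · simp only [Finset.disjoint_left]
      rintro ⟨v, r⟩ h1 h2
      simp_all
    · simp
  rw [← card_neighborFinset_eq_degree, hnbr, card_union_of_disjoint hdisj]
  split_ifs <;> simp

open scoped Classical in
lemma qMat_rootedProd {R V : Type} [Ring R] [Fintype V] [DecidableEq V] (G : SimpleGraph V)
    (k : ℕ) [NeZero k] :
    qMat R (rootedProd G k) = qMat R G ⊗ₖ single 0 0 1 + 1 ⊗ₖ qMat R (pathGraph k) := by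
  ext ⟨u, s⟩ ⟨v, r⟩
  simp only [Matrix.add_apply, kronecker_apply, qMat_apply, rootedProd_degree, rootedProd_adj,
    single_apply, one_apply, Prod.mk.injEq, Fin.val_eq_zero_iff, @eq_comm (Fin k) 0]
  split_ifs <;> subst_vars <;> simp_all

/-- Column `j` is the incidence vector of the edge `{j - 1, j}` of `P_k` (column `0` is `e₀`),
whence `W Wᵀ = Q(P_k) + E₀₀`. -/
def pathFactor (R : Type) [Zero R] [One R] [Add R] (k : ℕ) : Matrix (Fin k) (Fin k) R :=
  of fun s j => (if (j : ℕ) = s then 1 else 0) + if (j : ℕ) = s + 1 then 1 else 0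

lemma pathFactor_mul_transpose {R : Type} [Ring R] (k : ℕ) [NeZero k] :
    pathFactor R k * (pathFactor R k)ᵀ = qMat R (pathGraph k) + single 0 0 1 := by
  ext s r
  simp only [mul_apply, transpose_apply, pathFactor, of_apply]
  rw [Fin.sum_univ_eq_sum_range fun i : ℕ =>
    ((if i = (s : ℕ) then (1 : R) else 0) + if i = s + 1 then 1 else 0) *
      ((if i = (r : ℕ) then 1 else 0) + if i = r + 1 then 1 else 0)]
  simp only [add_mul, mul_add, ite_mul, one_mul, zero_mul, sum_add_distrib, sum_ite_eq',
    mem_range]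
  simp only [Matrix.add_apply, qMat_apply, pathGraph_degree, pathGraph_adj, single_apply,
    Fin.ext_iff, Fin.val_zero, Nat.cast_add, Nat.cast_ite, Nat.cast_one, Nat.cast_zero, s.isLt,
    if_true]
  split_ifs <;> first | omega | simp

lemma pathFactor_mul_single_zero {R : Type} [Ring R] (k : ℕ) [NeZero k] :
    pathFactor R k * single 0 0 1 = single 0 0 1 := by
  ext s r
  by_cases hr : r = 0
  · subst hr
    rw [mul_single_apply_same, mul_one]
    by_cases hs : s = 0
    · subst hs
      simp [pathFactor]
    · have hs' : (s : ℕ) ≠ 0 := Fin.val_ne_zero_iff.mpr hs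
      rw [single_apply_of_row_ne (Ne.symm hs)]
      simp [pathFactor, hs'.symm]
  · rw [mul_single_apply_of_ne _ _ _ _ _ hr, single_apply_of_col_ne _ _ (Ne.symm hr)]

lemma det_pathFactor {R : Type} [CommRing R] (k : ℕ) : (pathFactor R k).det = 1 := by
  rw [det_of_isUpperTriangular]
  · simp [pathFactor]
  · intro s j hjs
    have : (j : ℕ) < s := hjs
    simp only [pathFactor, of_apply]
    rw [if_neg (by omega), if_neg (by omega), add_zero]

lemma qMat_rootedProd_eq_mul {R V : Type} [CommRing R] [Fintype V] [DecidableEq V]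
    (G : SimpleGraph V) (k : ℕ) [NeZero k] :
    qMat R (rootedProd G k) =
      (1 ⊗ₖ pathFactor R k) * ((qMat R G - 1) ⊗ₖ single 0 0 1 + 1) *
        (1 ⊗ₖ pathFactor R k)ᵀ := by
  have hsingle : single (0 : Fin k) 0 (1 : R) * (pathFactor R k)ᵀ = single 0 0 1 := by
    rw [← transpose_single, ← transpose_mul, pathFactor_mul_single_zero, transpose_single]
  rw [← kroneckerMap_transpose, transpose_one, ← one_kronecker_one, Matrix.mul_add, Matrix.add_mul]
  simp only [← mul_kronecker_mul, Matrix.one_mul, Matrix.mul_one]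
  rw [pathFactor_mul_single_zero, hsingle, pathFactor_mul_transpose, qMat_rootedProd]
  ext
  simp only [Matrix.add_apply, Matrix.sub_apply, kroneckerMap_apply]
  ring

lemma det_sub_one_kronecker_single_add_one {R V ι : Type} [CommRing R] [Fintype V]
    [DecidableEq V] [Fintype ι] [DecidableEq ι] (A : Matrix V V R) (i : ι) :
    ((A - 1) ⊗ₖ single i i 1 + 1).det = A.det := by
  have hblock : (A - 1) ⊗ₖ single i i 1 + 1 = blockDiagonal fun j => if j = i then A else 1 := by
    ext ⟨u, s⟩ ⟨v, r⟩
    simp only [Matrix.add_apply, kronecker_apply, blockDiagonal_apply, single_apply, one_apply,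
      Prod.mk.injEq]
    rcases eq_or_ne s r with rfl | hsr
    · rcases eq_or_ne s i with rfl | hsi
      · simp [one_apply]
      · simp [hsi, Ne.symm hsi, one_apply]
    · rw [if_neg (by rintro ⟨rfl, rfl⟩; exact hsr rfl), if_neg hsr, mul_zero]
      simp [hsr]
  rw [hblock, det_blockDiagonal, Fintype.prod_eq_single i fun j hj => by rw [if_neg hj, det_one],
    if_pos rfl]

lemma det_qMat_rootedProd {R V : Type} [CommRing R] [Fintype V] [DecidableEq V]
    (G : SimpleGraph V) (k : ℕ) [NeZero k] :
    (qMat R (rootedProd G k)).det = (qMat R G).det := by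
  rw [qMat_rootedProd_eq_mul, det_mul, det_mul, det_transpose, det_kronecker, det_pathFactor,
    det_sub_one_kronecker_single_add_one, det_one, one_pow, one_pow, one_mul, one_mul, mul_one]

lemma det_qMat_iterRootedProd {R V : Type} [CommRing R] [Fintype V] [DecidableEq V]
    (G : SimpleGraph V) (k : ℕ) [NeZero k] :
    ∀ t, (qMat R (iterRootedProd G k t)).det = (qMat R G).det
  | 0 => rfl
  | t + 1 => (det_qMat_rootedProd _ k).trans (det_qMat_iterRootedProd G k t)

lemma abs_charpoly_coeff_zero {R n : Type} [CommRing R] [LinearOrder R] [IsStrictOrderedRing R]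
    [Fintype n] [DecidableEq n] (M : Matrix n n R) : |M.charpoly.coeff 0| = |M.det| := by
  rw [det_eq_sign_charpoly_coeff, abs_mul, abs_pow, abs_neg, abs_one, one_pow, one_mul]

/-- If the constant term of the characteristic polynomial of `Q(G)`
is `±2`, then for every `t ≥ 1` the constant term of the characteristic polynomial of
`Q(G∘P_k^t)` is also `±2`. -/
theorem iterRootedProd_const_term (n k : ℕ) (hk : 2 ≤ k) (G : SimpleGraph (Fin n))
    (ha : (qMat ℝ G).charpoly.coeff 0 = 2 ∨ (qMat ℝ G).charpoly.coeff 0 = -2) :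
    ∀ t, 1 ≤ t →
      (qMat ℝ (iterRootedProd G k t)).charpoly.coeff 0 = 2 ∨
      (qMat ℝ (iterRootedProd G k t)).charpoly.coeff 0 = -2 := by
  have : NeZero k := ⟨by omega⟩
  intro t _
  rw [← abs_eq zero_le_two] at ha ⊢
  rwa [abs_charpoly_coeff_zero, det_qMat_iterRootedProd, ← abs_charpoly_coeff_zero]
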